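/- arXiv:math/0606222 — 3 statements merged into one kernel-verified Lean document; each statement's English description precedes it below -/
import Mathlib

section
/- For every nonnegative integer m, the monic little q-Jacobi polynomial satisfies P_m^L(1) = ((qb;q)_m (qab;q)_m / (qab;q)_{2m}) \cdot (q^m a)^m. -/
/-- The q-Pochhammer symbol `(x;q)_m = ∏_{i=0}^{m-1} (1 - x q^i)`. -/
noncomputable def qPoch {F : Type*} [Field F] (x q : F) (m : ℕ) : F :=
  ∏ i ∈ Finset.range m, (1 - x * q ^ i)

/-- The monic little q-Jacobi polynomial
`P_m^L(z) = ((qb;q)_m / ((q^{m+1}ab;q)_m (qb)^m)) ⬝ ₃φ₂(q^{-m}, q^{m+1}ab, qbz; qb, 0; q, q)`. -/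
noncomputable def littleQJacobi {F : Type*} [Field F] (a b q : F) (m : ℕ) (z : F) : F :=
  qPoch (q * b) q m / (qPoch (q ^ (m + 1) * a * b) q m * (q * b) ^ m) *
    ∑ j ∈ Finset.range (m + 1),
      qPoch (q ^ (-(m : ℤ))) q j * qPoch (q ^ (m + 1) * a * b) q j * qPoch (q * b * z) q j /
        (qPoch q q j * qPoch (q * b) q j) * q ^ j

open Finset

lemma qPoch_add {F : Type*} [Field F] (x q : F) (s t : ℕ) :
    qPoch x q (s+t) = qPoch x q s * qPoch (x * q ^ s) q t := by
  rw [qPoch, qPoch, qPoch, Finset.prod_range_add]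
  congr 1
  refine Finset.prod_congr rfl fun i _ => ?_
  rw [pow_add]; ring

section B
variable {F : Type*} [Field F]

lemma qPoch_succ (x q : F) (n : ℕ) :
    qPoch x q (n+1) = qPoch x q n * (1 - x * q ^ n) := by
  simp [qPoch, Finset.prod_range_succ]

noncomputable def qbin (q : F) (n j : ℕ) : F :=
  qPoch q q n / (qPoch q q j * qPoch q q (n - j))

lemma qPoch_zero (x q : F) : qPoch x q 0 = 1 := by simp [qPoch]

lemma qbin_zero (q : F) (n : ℕ) (h : qPoch q q n ≠ 0) : qbin q n 0 = 1 := by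
  simp [qbin, qPoch_zero, div_self h]

lemma qbin_self (q : F) (n : ℕ) (h : qPoch q q n ≠ 0) : qbin q n n = 1 := by
  simp [qbin, qPoch_zero, div_self h]

lemma qbin_pascal (q : F) (n j : ℕ) (hj : j < n)
    (h : ∀ k ≤ n+1, qPoch q q k ≠ 0) :
    qbin q (n+1) (j+1) = qbin q n (j+1) + q^(n-j) * qbin q n j := by
  have e1 : n + 1 - (j+1) = n - j := by omega
  have e2 : n - j = (n - j - 1) + 1 := by omega
  · have e3 : n - (j+1) = n - j - 1 := by omega
    rw [qbin, qbin, qbin, e1, e3, e2, qPoch_succ q q n, qPoch_succ q q j,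
      qPoch_succ q q (n-j-1)]
    have hn : qPoch q q n ≠ 0 := h n (by omega)
    have hjj : qPoch q q j ≠ 0 := h j (by omega)
    have hj1 : qPoch q q j * (1 - q * q ^ j) ≠ 0 := by
      rw [← qPoch_succ]; exact h (j+1) (by omega)
    have hnj : qPoch q q (n-j-1) * (1 - q * q ^ (n-j-1)) ≠ 0 := by
      rw [← qPoch_succ]; rw [← e2]; exact h (n-j) (by omega)
    have hnj1 : qPoch q q (n-j-1) ≠ 0 := left_ne_zero_of_mul hnj
    have h1q : (1 - q * q ^ (n-j-1)) ≠ 0 := right_ne_zero_of_mul hnj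
    have h1qj : (1 - q * q ^ j) ≠ 0 := right_ne_zero_of_mul hj1
    simp only [Nat.add_sub_cancel]
    field_simp
    rw [pow_succ']
    have hpow2 : q * q ^ n = (q * q ^ j) * (q * q ^ (n-j-1)) := by
      have hnn : n + 1 = (j+1) + ((n-j-1)+1) := by omega
      calc q * q ^ n = q ^ (n+1) := (pow_succ' q n).symm
        _ = q ^ (j+1) * q ^ ((n-j-1)+1) := by rw [hnn, pow_add]
        _ = _ := by rw [pow_succ', pow_succ']
    rw [hpow2]
    ring
end B
section C
variable {F : Type*} [Field F]

lemma qbin_trinomial (q : F) (m j k : ℕ) (hk : k ≤ j) (hj : j ≤ m)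
    (h : ∀ i ≤ m, qPoch q q i ≠ 0) :
    qbin q m j * qbin q j k = qbin q m k * qbin q (m-k) (j-k) := by
  have e1 : m - k - (j - k) = m - j := by omega
  rw [qbin, qbin, qbin, qbin, e1]
  have h1 : qPoch q q j ≠ 0 := h j (by omega)
  have h2 : qPoch q q (m-j) ≠ 0 := h (m-j) (by omega)
  have h3 : qPoch q q k ≠ 0 := h k (by omega)
  have h4 : qPoch q q (j-k) ≠ 0 := h (j-k) (by omega)
  have h5 : qPoch q q (m-k) ≠ 0 := h (m-k) (by omega)
  field_simp

theorem gauss_qbinom (q : F) : ∀ (n : ℕ) (x : F), (∀ j ≤ n, qPoch q q j ≠ 0) →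
    ∑ j ∈ range (n+1), qbin q n j * q ^ (j.choose 2) * x ^ j
      = ∏ i ∈ range n, (1 + x * q ^ i) := by
  intro n
  induction n with
  | zero =>
    intro x h
    simp [qbin_zero q 0 (h 0 le_rfl)]
  | succ n ih =>
    intro x h
    have hn : ∀ j ≤ n, qPoch q q j ≠ 0 := fun j hj => h j (by omega)
    have hb0 : qbin q (n+1) 0 = 1 := qbin_zero q (n+1) (h (n+1) le_rfl)
    have hb0' : qbin q n 0 = 1 := qbin_zero q n (hn n le_rfl)
    have hbt : qbin q (n+1) (n+1) = 1 := qbin_self q (n+1) (h (n+1) le_rfl)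
    have hbt' : qbin q n n = 1 := qbin_self q n (hn n le_rfl)
    set G : ℕ → F := fun j => qbin q n j * q ^ (j.choose 2) * x ^ j with hG
    have hmid : ∀ j ∈ range n, qbin q (n+1) (j+1) * q ^ ((j+1).choose 2) * x ^ (j+1)
        = G (j+1) + G j * (x * q ^ n) := by
      intro j hj
      have hjn : j < n := Finset.mem_range.mp hj
      rw [hG]
      simp only []
      rw [qbin_pascal q n j hjn h]
      have hc : (j+1).choose 2 = j.choose 2 + j := by
        rw [Nat.choose_succ_succ]; simp [Nat.choose_one_right, Nat.add_comm]
      have hq : q ^ (n-j) * q ^ j = q ^ n := by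
        rw [← pow_add]; congr 1; omega
      rw [hc, pow_add, pow_succ, ← hq]
      ring
    have L : ∑ j ∈ range (n+1+1), qbin q (n+1) j * q ^ (j.choose 2) * x ^ j
        = (∑ j ∈ range n, (G (j+1) + G j * (x * q ^ n)))
          + qbin q (n+1) (n+1) * q ^ ((n+1).choose 2) * x ^ (n+1) + 1 := by
      rw [Finset.sum_range_succ' _ (n+1), Finset.sum_range_succ _ n,
        Finset.sum_congr rfl hmid, hb0]
      simp
    have htop : qbin q (n+1) (n+1) * q ^ ((n+1).choose 2) * x ^ (n+1)
        = G n * (x * q ^ n) := by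
      rw [hbt, hG]
      simp only []
      rw [hbt']
      have hc : (n+1).choose 2 = n.choose 2 + n := by
        rw [Nat.choose_succ_succ]; simp [Nat.choose_one_right, Nat.add_comm]
      rw [hc, pow_add, pow_succ]
      ring
    have R : (∑ j ∈ range (n+1), G j) * (1 + x * q ^ n)
        = (∑ j ∈ range n, (G (j+1) + G j * (x * q ^ n)))
          + G n * (x * q ^ n) + 1 := by
      rw [Finset.sum_add_distrib, mul_add, mul_one, Finset.sum_mul,
        Finset.sum_range_succ' G n, Finset.sum_range_succ (fun j => G j * (x * q ^ n)) n, hG]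
      simp only []
      rw [hb0']
      norm_num
      ring
    rw [Finset.prod_range_succ, ← ih x hn, L, htop, R]
end C
section D
variable {F : Type*} [Field F]

lemma choose2_add' (k i : ℕ) : (k+i).choose 2 = k.choose 2 + i.choose 2 + k*i := by
  induction i with
  | zero => simp
  | succ i ih =>
    have hc : (k+i+1).choose 2 = (k+i).choose 2 + (k+i) := by
      rw [Nat.choose_succ_succ]; simp [Nat.choose_one_right, Nat.add_comm]
    have hc2 : (i+1).choose 2 = i.choose 2 + i := by
      rw [Nat.choose_succ_succ]; simp [Nat.choose_one_right, Nat.add_comm]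
    rw [← Nat.add_assoc, hc, hc2, ih]; ring

lemma sum_range_id_choose' (n : ℕ) : ∑ i ∈ range n, i = n.choose 2 := by
  induction n with
  | zero => simp
  | succ n ih =>
    have hc : (n+1).choose 2 = n.choose 2 + n := by
      rw [Nat.choose_succ_succ]; simp [Nat.choose_one_right, Nat.add_comm]
    rw [Finset.sum_range_succ, ih, hc]

lemma qpoch_inv (q : F) (m j : ℕ) (hq : q ≠ 0) (hj : j ≤ m) :
    qPoch ((q^m)⁻¹ : F) q j * qPoch q q (m-j) * (q^m)^j
      = (-1)^j * q^(j.choose 2) * qPoch q q m := by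
  have hQ : (q^m : F) ≠ 0 := pow_ne_zero _ hq
  have ha : qPoch ((q^m)⁻¹ : F) q j * (q^m)^j = ∏ i ∈ range j, (q^m - q^i) := by
    have hcc : (q^m)^j = ∏ _i ∈ range j, (q^m : F) := by
      rw [Finset.prod_const, Finset.card_range]
    rw [qPoch, hcc, ← Finset.prod_mul_distrib]
    refine Finset.prod_congr rfl fun i _ => ?_
    field_simp
  have hb : (∏ i ∈ range j, (q^m - q^i)) = (-1)^j * q^(j.choose 2)
      * ∏ i ∈ range j, (1 - q^(m-i)) := by
    have : ∀ i ∈ range j, q^m - q^i = (-1) * (q^i * (1 - q^(m-i))) := by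
      intro i hi
      have hi' : i < j := Finset.mem_range.mp hi
      have : q^i * q^(m-i) = q^m := by rw [← pow_add]; congr 1; omega
      rw [mul_sub, mul_one, this]; ring
    rw [Finset.prod_congr rfl this, Finset.prod_mul_distrib, Finset.prod_mul_distrib,
      Finset.prod_const, Finset.prod_pow_eq_pow_sum, sum_range_id_choose',
      Finset.card_range]
    ring
  have hc : (∏ i ∈ range j, (1 - q^(m-i))) = qPoch (q * q^(m-j)) q j := by
    rw [qPoch]
    rw [← Finset.prod_range_reflect (fun i => 1 - q^(m-i)) j]
    refine Finset.prod_congr rfl fun i hi => ?_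
    have hi' : i < j := Finset.mem_range.mp hi
    have : q * q^(m-j) * q^i = q^(m-(j-1-i)) := by
      rw [← pow_succ' q (m-j), ← pow_add]; congr 1; omega
    rw [this]
  have hd : qPoch q q m = qPoch q q (m-j) * qPoch (q * q^(m-j)) q j := by
    have hm : m = (m-j) + j := by omega
    calc qPoch q q m = qPoch q q ((m-j)+j) := by rw [← hm]
      _ = _ := by
        rw [qPoch, qPoch, qPoch, Finset.prod_range_add]
        congr 1
        refine Finset.prod_congr rfl fun i _ => ?_
        rw [pow_add]; ring
  calc qPoch ((q^m)⁻¹ : F) q j * qPoch q q (m-j) * (q^m)^j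
      = (qPoch ((q^m)⁻¹ : F) q j * (q^m)^j) * qPoch q q (m-j) := by ring
    _ = ((-1)^j * q^(j.choose 2) * qPoch (q * q^(m-j)) q j) * qPoch q q (m-j) := by
        rw [ha, hb, hc]
    _ = (-1)^j * q^(j.choose 2) * qPoch q q m := by rw [hd]; ring

end D
section E
variable {F : Type*} [Field F]

lemma npms (k : ℕ) : ((-1 : F))^(k*2) = 1 := by
  rw [pow_mul', neg_one_sq, one_pow]

lemma two_choose2' (m : ℕ) : m.choose 2 + m.choose 2 + m = m*m := by
  induction m with
  | zero => simp
  | succ m ih =>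
    have hc : (m+1).choose 2 = m.choose 2 + m := by
      rw [Nat.choose_succ_succ]; simp [Nat.choose_one_right, Nat.add_comm]
    rw [hc]; nlinarith [ih]

theorem key_sum (q A : F) (m : ℕ) (hq : q ≠ 0) (h2 : ∀ j ≤ m, qPoch q q j ≠ 0) :
    ∑ j ∈ range (m+1), qPoch ((q^m)⁻¹ : F) q j * qPoch A q j / qPoch q q j * q ^ j
      = A ^ m := by
  have hQ : (q^m : F) ≠ 0 := pow_ne_zero _ hq
  set T : ℕ → ℕ → F := fun j k =>
    qbin q m j * qbin q j k * q ^ (j.choose 2 + k.choose 2) * (-A) ^ k *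
      ((-1)^j * ((q^m)⁻¹)^j * q ^ j) with hT
  have stepAB : ∀ j ∈ range (m+1),
      qPoch ((q^m)⁻¹ : F) q j * qPoch A q j / qPoch q q j * q ^ j
        = ∑ k ∈ range (j+1), T j k := by
    intro j hj
    have hjm : j ≤ m := Nat.lt_succ_iff.mp (Finset.mem_range.mp hj)
    have hAj : qPoch A q j = ∑ k ∈ range (j+1), qbin q j k * q ^ (k.choose 2) * (-A) ^ k := by
      rw [gauss_qbinom q j (-A) (fun i hi => h2 i (le_trans hi hjm))]
      rw [qPoch]
      refine Finset.prod_congr rfl fun i _ => ?_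
      ring
    have hinv := qpoch_inv q m j hq hjm
    have hnz1 : qPoch q q j ≠ 0 := h2 j hjm
    have hnz2 : qPoch q q (m-j) ≠ 0 := h2 (m-j) (by omega)
    have hQj : ((q^m : F))^j ≠ 0 := pow_ne_zero _ hQ
    have hpj : qPoch ((q^m)⁻¹ : F) q j
        = (-1)^j * q^(j.choose 2) * (qbin q m j * qPoch q q j) * ((q^m)⁻¹)^j := by
      rw [qbin, inv_pow]
      field_simp
      simp only [one_div]
      linear_combination hinv
    rw [hpj, hAj, Finset.mul_sum, Finset.sum_div, Finset.sum_mul]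
    refine Finset.sum_congr rfl fun k hk => ?_
    rw [hT]
    simp only []
    rw [pow_add q (j.choose 2) (k.choose 2)]
    field_simp
  rw [Finset.sum_congr rfl stepAB]
  have stepC : ∑ j ∈ range (m+1), ∑ k ∈ range (j+1), T j k
      = ∑ k ∈ range (m+1), ∑ i ∈ range (m+1-k), T (k+i) k := by
    have e1 : ∀ j ∈ range (m+1), ∑ k ∈ range (j+1), T j k
        = ∑ k ∈ range (m+1), if k ≤ j then T j k else 0 := by
      intro j hj
      have hjm : j < m+1 := Finset.mem_range.mp hj
      rw [Finset.sum_ite, Finset.sum_const_zero, add_zero]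
      congr 1
      ext k
      simp only [Finset.mem_filter, Finset.mem_range]
      omega
    rw [Finset.sum_congr rfl e1, Finset.sum_comm]
    refine Finset.sum_congr rfl fun k hk => ?_
    rw [Finset.sum_ite, Finset.sum_const_zero, add_zero]
    have e2 : Finset.filter (fun j => k ≤ j) (Finset.range (m+1)) = Finset.Ico k (m+1) := by
      ext j
      simp only [Finset.mem_filter, Finset.mem_range, Finset.mem_Ico]
      omega
    rw [e2, Finset.sum_Ico_eq_sum_range]
  rw [stepC]
  have stepD : ∀ k ∈ range (m+1),
      (∑ i ∈ range (m+1-k), T (k+i) k) = if k = m then A^m else 0 := by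
    intro k hk
    have hkm : k ≤ m := Nat.lt_succ_iff.mp (Finset.mem_range.mp hk)
    by_cases hke : k = m
    · subst hke
      rw [if_pos rfl]
      have e1 : k+1-k = 1 := by omega
      rw [e1, Finset.sum_range_one]
      rw [hT]
      simp only [Nat.add_zero]
      rw [qbin_self q k (h2 k le_rfl)]
      have hQQ : (q^(k*k) : F) ≠ 0 := pow_ne_zero _ hq
      have e2 : ((q^k)⁻¹ : F)^k = (q^(k*k))⁻¹ := by rw [inv_pow, ← pow_mul]
      rw [e2]
      have e3 : (q : F)^(k.choose 2 + k.choose 2) * q^k = q^(k*k) := by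
        rw [← pow_add]
        congr 1
        rw [← two_choose2' k]
      have e4 : ((-A)^k * (-1)^k : F) = A^k := by
        rw [← mul_pow, neg_mul_neg, mul_one]
      calc (1:F) * 1 * q ^ (k.choose 2 + k.choose 2) * (-A) ^ k *
            ((-1) ^ k * (q ^ (k*k))⁻¹ * q ^ k)
          = (q ^ (k.choose 2 + k.choose 2) * q ^ k) * (q ^ (k*k))⁻¹
              * ((-A) ^ k * (-1) ^ k) := by ring
        _ = A^k := by rw [e3, mul_inv_cancel₀ hQQ, e4, one_mul]
    · rw [if_neg hke]
      have hklt : k < m := lt_of_le_of_ne hkm hke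
      set x : F := -(q * q^k * (q^m)⁻¹) with hx
      set C : F := qbin q m k * q^(k.choose 2 + k.choose 2 + k) * A^k * ((q^m)⁻¹)^k with hC
      have htri : ∀ i ∈ range (m+1-k), T (k+i) k
          = C * (qbin q (m-k) i * q ^ (i.choose 2) * x^i) := by
        intro i hi
        have him : k + i ≤ m := by
          have := Finset.mem_range.mp hi; omega
        have htr := qbin_trinomial q m (k+i) k (Nat.le_add_right k i) him h2
        have e4 : k + i - k = i := by omega
        rw [e4] at htr
        rw [hT]
        simp only []
        rw [htr, choose2_add' k i, hx, hC]
        ring_nf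
        rw [npms]
        ring
      rw [Finset.sum_congr rfl htri, ← Finset.mul_sum]
      have e5 : m+1-k = (m-k)+1 := by omega
      rw [e5, gauss_qbinom q (m-k) x (fun i hi => h2 i (by omega))]
      have hzero : (∏ i ∈ range (m-k), (1 + x * q ^ i)) = 0 := by
        refine Finset.prod_eq_zero (i := m-k-1) (Finset.mem_range.mpr (by omega)) ?_
        rw [hx]
        have e6 : q * q^k * q^(m-k-1) = q^m := by
          rw [← pow_succ' q k, ← pow_add]
          congr 1
          omega
        have e7 : -(q * q^k * (q^m)⁻¹) * q^(m-k-1) = -1 := by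
          have e8 : q * q^k * (q^m)⁻¹ * q^(m-k-1) = (q * q^k * q^(m-k-1)) * (q^m)⁻¹ := by
            ring
          rw [neg_mul, e8, e6, mul_inv_cancel₀ hQ]
        rw [e7]
        ring
      rw [hzero, mul_zero]
  rw [Finset.sum_congr rfl stepD, Finset.sum_ite_eq' (range (m+1)) m (fun _ => A^m)]
  simp

end E

/-- `P_m^L(1) = ((qb;q)_m (qab;q)_m / (qab;q)_{2m}) (q^m a)^m`. -/
theorem littleQJacobi_eval_one {F : Type*} [Field F] (a b q : F) (m : ℕ)
    (hq : q ≠ 0) (hqb : q * b ≠ 0)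
    (h1 : qPoch (q ^ (m + 1) * a * b) q m ≠ 0)
    (h2 : ∀ j ≤ m, qPoch q q j ≠ 0)
    (h3 : ∀ j ≤ m, qPoch (q * b) q j ≠ 0)
    (h4 : qPoch (q * a * b) q (2 * m) ≠ 0) :
    littleQJacobi a b q m 1 =
      qPoch (q * b) q m * qPoch (q * a * b) q m / qPoch (q * a * b) q (2 * m) *
        (q ^ m * a) ^ m := by
  set A : F := q ^ (m + 1) * a * b with hA
  have hzpow : (q : F) ^ (-(m : ℤ)) = (q ^ m)⁻¹ := by
    rw [zpow_neg, zpow_natCast]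
  have hsum : ∑ j ∈ Finset.range (m + 1),
      qPoch (q ^ (-(m : ℤ))) q j * qPoch A q j * qPoch (q * b * 1) q j /
        (qPoch q q j * qPoch (q * b) q j) * q ^ j = A ^ m := by
    rw [← key_sum q A m hq h2]
    refine Finset.sum_congr rfl fun j hj => ?_
    have hjm : j ≤ m := Nat.lt_succ_iff.mp (Finset.mem_range.mp hj)
    have hb1 : (q * b * 1 : F) = q * b := by ring
    rw [hb1, hzpow]
    have hW : qPoch (q * b) q j ≠ 0 := h3 j hjm
    have hP : qPoch q q j ≠ 0 := h2 j hjm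
    congr 1
    field_simp
  have hsplit : qPoch (q * a * b) q (2 * m) = qPoch (q * a * b) q m * qPoch A q m := by
    have h2m : 2 * m = m + m := by omega
    rw [h2m, qPoch_add]
    congr 2
    rw [hA]
    rw [pow_succ]
    ring
  have hP3 : qPoch (q * a * b) q m ≠ 0 := by
    rw [hsplit] at h4
    exact left_ne_zero_of_mul h4
  have hApow : A ^ m = (q * b) ^ m * (q ^ m * a) ^ m := by
    rw [hA, ← mul_pow]
    congr 1
    rw [pow_succ]
    ring
  rw [littleQJacobi, ← hA, hsum, hsplit, hApow]
  have hqbm : ((q * b : F)) ^ m ≠ 0 := pow_ne_zero _ hqb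
  field_simp
  rw [mul_div_assoc, div_self (by rw [mul_right_comm]; exact hP3), mul_one]
end

section
/- The q-Saalschütz sum: for every nonnegative integer m, \sum_{j=0}^m \frac{(q^{-m};q)_j (a;q)_j (b;q)_j}{(q;q)_j (abq^{1-m}/c;q)_j (c;q)_j} q^j = \frac{(c/a;q)_m (c/b;q)_m}{(c;q)_m (c/(ab);q)_m}, as an identity in \mathbb{C}(a,b,c,q). -/
set_option maxHeartbeats 1000000

namespace QSaal

variable {F : Type*} [Field F]

lemma qPoch_succ (x q : F) (j : ℕ) :
    qPoch x q (j + 1) = qPoch x q j * (1 - x * q ^ j) := Finset.prod_range_succ _ _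

lemma qPoch_succ' (x q : F) (j : ℕ) :
    qPoch x q (j + 1) = (1 - x) * qPoch (x * q) q j := by
  rw [qPoch, Finset.prod_range_succ', qPoch, pow_zero, mul_one, mul_comm _ (1 - x)]
  congr 1
  refine Finset.prod_congr rfl fun i _ => ?_
  rw [pow_succ]
  ring

lemma qPoch_factor_ne {x q : F} {j : ℕ} (h : qPoch x q j ≠ 0) {i : ℕ} (hi : i < j) :
    1 - x * q ^ i ≠ 0 := by
  rw [qPoch, Finset.prod_ne_zero_iff] at h
  exact h i (Finset.mem_range.mpr hi)

lemma qPoch_ne_of_factors {x q : F} {j : ℕ} (h : ∀ i < j, 1 - x * q ^ i ≠ 0) :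
    qPoch x q j ≠ 0 := by
  rw [qPoch, Finset.prod_ne_zero_iff]
  exact fun i hi => h i (Finset.mem_range.mp hi)

lemma qPoch_eq_zero {x q : F} {j i : ℕ} (hi : i < j) (h : 1 - x * q ^ i = 0) :
    qPoch x q j = 0 :=
  Finset.prod_eq_zero (Finset.mem_range.mpr hi) h

/-- The summand of the `₃φ₂`. -/
noncomputable def Tm (u e a b c q : F) (k : ℕ) : F :=
  qPoch u q k * qPoch a q k * qPoch b q k /
    (qPoch q q k * qPoch e q k * qPoch c q k) * q ^ k

/-- The WZ-certificate partial sums. -/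
noncomputable def g (a b c q Y : F) (k : ℕ) : F :=
  ((1 - c * Y) * (1 - c / (a * b) * Y) - (1 - c / a * Y) * (1 - c / b * Y)) *
    (qPoch Y⁻¹ q k * qPoch (a * q) q k * qPoch (b * q) q k) /
    (qPoch q q k * qPoch (a * b * q / (c * Y)) q k * qPoch c q k)

lemma conv1 (a b c q Y X D1 D2 D3 A1 A2 A3 : F)
    (ha : a ≠ 0) (hb : b ≠ 0) (hc : c ≠ 0) (hq : q ≠ 0) (hY : Y ≠ 0)
    (h4 : c * Y - a * b ≠ 0) :
    (1 - c * Y) * (1 - c / (a * b) * Y) *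
      ((1 - (q * Y)⁻¹) * A1 * ((1 - a) * A2) * ((1 - b) * A3) /
        (D1 * (1 - q * X) * ((1 - a * b / (c * Y)) * D2) * (D3 * (1 - c * X))) * (X * q))
    = A1 * A2 * A3 / (D1 * D2 * D3) *
      (((1 - c * Y) * (a * b - c * Y) * (q * Y - 1) * (1 - a) * (1 - b) * (X * q) * (c * Y)) /
        ((a * b) * (q * Y) * ((1 - q * X) * (c * Y - a * b) * (1 - c * X)))) := by
  have h4' : (1 : F) - a * b / (c * Y) ≠ 0 := by
    rw [show (1 : F) - a * b / (c * Y) = (c * Y - a * b) / (c * Y) by field_simp]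
    exact div_ne_zero h4 (mul_ne_zero hc hY)
  rw [show (1 : F) - c / (a * b) * Y = (a * b - c * Y) / (a * b) by field_simp,
    show (1 : F) - (q * Y)⁻¹ = (q * Y - 1) / (q * Y) by field_simp,
    show (1 : F) - a * b / (c * Y) = (c * Y - a * b) / (c * Y) by field_simp]
  simp only [div_eq_mul_inv, mul_inv, inv_inv]
  ring

lemma conv2 (a b c q Y X D1 D2 D3 A1 A2 A3 : F)
    (ha : a ≠ 0) (hb : b ≠ 0) (hc : c ≠ 0) (hq : q ≠ 0) (hY : Y ≠ 0)
    (h2' : 1 - a * b * q / (c * Y) * X ≠ 0) :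
    (1 - c / a * Y) * (1 - c / b * Y) *
      (A1 * (1 - Y⁻¹ * X) * ((1 - a) * A2) * ((1 - b) * A3) /
        (D1 * (1 - q * X) * (D2 * (1 - a * b * q / (c * Y) * X)) * (D3 * (1 - c * X))) * (X * q))
    = A1 * A2 * A3 / (D1 * D2 * D3) *
      (((a - c * Y) * (b - c * Y) * (Y - X) * (1 - a) * (1 - b) * (X * q) * (c * Y)) /
        ((a * b) * Y * ((1 - q * X) * (c * Y - a * b * q * X) * (1 - c * X)))) := by
  rw [show (1 : F) - c / a * Y = (a - c * Y) / a by field_simp,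
    show (1 : F) - c / b * Y = (b - c * Y) / b by field_simp,
    show (1 : F) - Y⁻¹ * X = (Y - X) / Y by field_simp,
    show (1 : F) - a * b * q / (c * Y) * X = (c * Y - a * b * q * X) / (c * Y) by field_simp]
  simp only [div_eq_mul_inv, mul_inv, inv_inv]
  ring

lemma conv3 (a b c q Y X D1 D2 D3 A1 A2 A3 : F)
    (ha : a ≠ 0) (hb : b ≠ 0) (hc : c ≠ 0) (hq : q ≠ 0) (hY : Y ≠ 0)
    (h2' : 1 - a * b * q / (c * Y) * X ≠ 0) :
    ((1 - c * Y) * (1 - c / (a * b) * Y) - (1 - c / a * Y) * (1 - c / b * Y)) *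
      (A1 * (1 - Y⁻¹ * X) * (A2 * (1 - a * q * X)) * (A3 * (1 - b * q * X))) /
      (D1 * (1 - q * X) * (D2 * (1 - a * b * q / (c * Y) * X)) * (D3 * (1 - c * X)))
    = A1 * A2 * A3 / (D1 * D2 * D3) *
      ((((1 - c * Y) * (a * b - c * Y) - (a - c * Y) * (b - c * Y)) *
          ((Y - X) * (1 - a * q * X) * (1 - b * q * X)) * (c * Y)) /
        ((a * b) * Y * ((1 - q * X) * (c * Y - a * b * q * X) * (1 - c * X)))) := by
  rw [show (1 : F) - c / (a * b) * Y = (a * b - c * Y) / (a * b) by field_simp,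
    show (1 : F) - c / a * Y = (a - c * Y) / a by field_simp,
    show (1 : F) - c / b * Y = (b - c * Y) / b by field_simp,
    show (1 : F) - Y⁻¹ * X = (Y - X) / Y by field_simp,
    show (1 : F) - a * b * q / (c * Y) * X = (c * Y - a * b * q * X) / (c * Y) by field_simp]
  simp only [div_eq_mul_inv, mul_inv, inv_inv]
  ring

lemma conv4 (a b c q Y : F) (D1 D2 D3 A1 A2 A3 : F)
    (ha : a ≠ 0) (hb : b ≠ 0) (hc : c ≠ 0) (hY : Y ≠ 0) :
    ((1 - c * Y) * (1 - c / (a * b) * Y) - (1 - c / a * Y) * (1 - c / b * Y)) *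
      (A1 * A2 * A3) / (D1 * D2 * D3)
    = A1 * A2 * A3 / (D1 * D2 * D3) *
      (((1 - c * Y) * (a * b - c * Y) - (a - c * Y) * (b - c * Y)) / (a * b)) := by
  field_simp

theorem scalar_keyS (a b c q Y X : F)
    (ha : a ≠ 0) (hb : b ≠ 0) (hc : c ≠ 0) (hq : q ≠ 0) (hY : Y ≠ 0)
    (h1 : 1 - q * X ≠ 0) (h2 : c * Y - a * b * q * X ≠ 0) (h3 : 1 - c * X ≠ 0)
    (h4 : c * Y - a * b ≠ 0) :
    ((1 - c * Y) * (a * b - c * Y) * (q * Y - 1) * (1 - a) * (1 - b) * (X * q) * (c * Y)) /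
      ((a * b) * (q * Y) * ((1 - q * X) * (c * Y - a * b) * (1 - c * X)))
    - ((a - c * Y) * (b - c * Y) * (Y - X) * (1 - a) * (1 - b) * (X * q) * (c * Y)) /
      ((a * b) * Y * ((1 - q * X) * (c * Y - a * b * q * X) * (1 - c * X)))
    = (((1 - c * Y) * (a * b - c * Y) - (a - c * Y) * (b - c * Y)) *
        ((Y - X) * (1 - a * q * X) * (1 - b * q * X)) * (c * Y)) /
      ((a * b) * Y * ((1 - q * X) * (c * Y - a * b * q * X) * (1 - c * X)))
    - ((1 - c * Y) * (a * b - c * Y) - (a - c * Y) * (b - c * Y)) / (a * b) := by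
  have hab : (a * b : F) ≠ 0 := mul_ne_zero ha hb
  have hD1 : ((a * b) * (q * Y) * ((1 - q * X) * (c * Y - a * b) * (1 - c * X)) : F) ≠ 0 :=
    mul_ne_zero (mul_ne_zero hab (mul_ne_zero hq hY)) (mul_ne_zero (mul_ne_zero h1 h4) h3)
  have hD2 : ((a * b) * Y * ((1 - q * X) * (c * Y - a * b * q * X) * (1 - c * X)) : F) ≠ 0 :=
    mul_ne_zero (mul_ne_zero hab hY) (mul_ne_zero (mul_ne_zero h1 h2) h3)
  rw [div_sub_div _ _ hD1 hD2, div_sub_div _ _ hD2 hab,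
    div_eq_div_iff (mul_ne_zero hD1 hD2) (mul_ne_zero hD2 hab)]
  ring

theorem scalar_keyN (a b c q Y : F)
    (ha : a ≠ 0) (hb : b ≠ 0) (hc : c ≠ 0) (hq : q ≠ 0) (hY : Y ≠ 0)
    (h1 : 1 - q * Y ≠ 0) (h3 : 1 - c * Y ≠ 0) (h4 : c * Y - a * b ≠ 0) :
    ((1 - c * Y) * (a * b - c * Y) * (q * Y - 1) * (1 - a) * (1 - b) * (Y * q) * (c * Y)) /
      ((a * b) * (q * Y) * ((1 - q * Y) * (c * Y - a * b) * (1 - c * Y)))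
    = -(((1 - c * Y) * (a * b - c * Y) - (a - c * Y) * (b - c * Y)) / (a * b)) := by
  have hD : ((a * b) * (q * Y) * ((1 - q * Y) * (c * Y - a * b) * (1 - c * Y)) : F) ≠ 0 :=
    mul_ne_zero (mul_ne_zero (mul_ne_zero ha hb) (mul_ne_zero hq hY))
      (mul_ne_zero (mul_ne_zero h1 h4) h3)
  rw [div_eq_iff hD]
  field_simp
  ring

end QSaal

/-- the q-Saalschütz sum
`₃φ₂(q^{-m}, a, b; abq^{1-m}/c, c; q, q) = (c/a;q)_m (c/b;q)_m / ((c;q)_m (c/(ab);q)_m)`. -/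
theorem q_saalschutz {F : Type*} [Field F] (a b c q : F) (m : ℕ)
    (hq : q ≠ 0) (ha : a ≠ 0) (hb : b ≠ 0) (hc : c ≠ 0)
    (h2 : ∀ j ≤ m, qPoch q q j ≠ 0)
    (h3 : ∀ j ≤ m, qPoch c q j ≠ 0)
    (h4 : ∀ j ≤ m, qPoch (a * b * q ^ ((1 : ℤ) - m) / c) q j ≠ 0)
    (h5 : qPoch (c / (a * b)) q m ≠ 0) :
    ∑ j ∈ Finset.range (m + 1),
        qPoch (q ^ (-(m : ℤ))) q j * qPoch a q j * qPoch b q j /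
          (qPoch q q j * qPoch (a * b * q ^ ((1 : ℤ) - m) / c) q j * qPoch c q j) * q ^ j
      = qPoch (c / a) q m * qPoch (c / b) q m /
          (qPoch c q m * qPoch (c / (a * b)) q m) := by
  have hfq : ∀ i, i < m → (1 : F) - q * q ^ i ≠ 0 :=
    fun i hi => QSaal.qPoch_factor_ne (h2 m le_rfl) hi
  have hfc : ∀ i, i < m → (1 : F) - c * q ^ i ≠ 0 :=
    fun i hi => QSaal.qPoch_factor_ne (h3 m le_rfl) hi
  have hfcab : ∀ i, i < m → (1 : F) - c / (a * b) * q ^ i ≠ 0 :=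
    fun i hi => QSaal.qPoch_factor_ne h5 hi
  have hE : ∀ t : ℤ, 1 - (m : ℤ) ≤ t → t ≤ 0 → (1 : F) - a * b / c * q ^ t ≠ 0 := by
    intro t h1t h2t
    obtain ⟨i, him, ht⟩ : ∃ i : ℕ, i < m ∧ t = (1 : ℤ) - (m : ℤ) + (i : ℤ) :=
      ⟨(t - (1 - (m : ℤ))).toNat, by omega, by omega⟩
    have hfac := QSaal.qPoch_factor_ne (h4 m le_rfl) him
    have heq : a * b * q ^ ((1 : ℤ) - (m : ℤ)) / c * q ^ i = a * b / c * q ^ t := by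
      rw [ht, zpow_add₀ hq, zpow_natCast]
      ring
    rwa [heq] at hfac
  suffices H : ∀ n : ℕ, n ≤ m →
      ∑ j ∈ Finset.range (n + 1),
          qPoch (q ^ (-(n : ℤ))) q j * qPoch a q j * qPoch b q j /
            (qPoch q q j * qPoch (a * b * q ^ ((1 : ℤ) - n) / c) q j * qPoch c q j) * q ^ j
        = qPoch (c / a) q n * qPoch (c / b) q n /
            (qPoch c q n * qPoch (c / (a * b)) q n) by
    exact H m le_rfl
  intro n
  induction n with
  | zero => intro _; simp [qPoch]
  | succ n ih =>
    intro hn1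
    have hn : n ≤ m := Nat.le_of_succ_le hn1
    have hnm : n < m := hn1
    have hY : (q : F) ^ n ≠ 0 := pow_ne_zero n hq
    have hcY : (c * q ^ n : F) ≠ 0 := mul_ne_zero hc hY
    -- rewrite the integer powers into `q ^ n`-style expressions
    have hU : (q : F) ^ (-(n : ℤ)) = (q ^ n)⁻¹ := by
      rw [zpow_neg, zpow_natCast]
    have hU' : (q : F) ^ (-((n + 1 : ℕ) : ℤ)) = (q * q ^ n)⁻¹ := by
      push_cast
      rw [zpow_neg, zpow_add₀ hq, zpow_one, zpow_natCast, mul_comm (q ^ n) q]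
    have hEq : a * b * q ^ ((1 : ℤ) - (n : ℤ)) / c = a * b * q / (c * q ^ n) := by
      rw [sub_eq_add_neg, zpow_add₀ hq, zpow_one, zpow_neg, zpow_natCast]
      field_simp
    have hEq' : a * b * q ^ ((1 : ℤ) - ((n + 1 : ℕ) : ℤ)) / c = a * b / (c * q ^ n) := by
      push_cast
      rw [show (1 : ℤ) - ((n : ℤ) + 1) = -(n : ℤ) by ring, zpow_neg, zpow_natCast]
      field_simp
    simp only [hU', hEq']
    have IH := ih hn
    simp only [hU, hEq] at IH
    show (∑ j ∈ Finset.range (n + 1 + 1),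
        QSaal.Tm ((q * q ^ n)⁻¹) (a * b / (c * q ^ n)) a b c q j)
      = qPoch (c / a) q (n + 1) * qPoch (c / b) q (n + 1) /
          (qPoch c q (n + 1) * qPoch (c / (a * b)) q (n + 1))
    have IH' : (∑ j ∈ Finset.range (n + 1),
        QSaal.Tm ((q ^ n)⁻¹) (a * b * q / (c * q ^ n)) a b c q j)
      = qPoch (c / a) q n * qPoch (c / b) q n /
          (qPoch c q n * qPoch (c / (a * b)) q n) := IH
    -- nonvanishing facts
    have hfq' : ∀ j, j ≤ n → (1 : F) - q * q ^ j ≠ 0 := fun j hj => hfq j (by omega)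
    have hfc' : ∀ j, j ≤ n → (1 : F) - c * q ^ j ≠ 0 := fun j hj => hfc j (by omega)
    have hEfac : ∀ j, j < n → (1 : F) - a * b * q / (c * q ^ n) * q ^ j ≠ 0 := by
      intro j hj
      have ht := hE ((1 : ℤ) - (n : ℤ) + (j : ℤ)) (by omega) (by omega)
      have heq2 : a * b / c * q ^ ((1 : ℤ) - (n : ℤ) + (j : ℤ))
          = a * b * q / (c * q ^ n) * q ^ j := by
        rw [show (1 : ℤ) - (n : ℤ) + (j : ℤ) = 1 + (j : ℤ) - (n : ℤ) by ring,
          zpow_sub₀ hq, zpow_add₀ hq, zpow_one, zpow_natCast, zpow_natCast]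
        field_simp
      rwa [heq2] at ht
    have hE' : (1 : F) - a * b / (c * q ^ n) ≠ 0 := by
      have ht := hE (-(n : ℤ)) (by omega) (by omega)
      have heq2 : a * b / c * q ^ (-(n : ℤ)) = a * b / (c * q ^ n) := by
        rw [zpow_neg, zpow_natCast]
        field_simp
      rwa [heq2] at ht
    have hflat : ∀ j, j < n → (c * q ^ n - a * b * q * q ^ j : F) ≠ 0 := by
      intro j hj
      have h := hEfac j hj
      have hrw : (c * q ^ n - a * b * q * q ^ j : F)
          = (1 - a * b * q / (c * q ^ n) * q ^ j) * (c * q ^ n) := by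
        field_simp
      rw [hrw]
      exact mul_ne_zero h hcY
    have hflat' : (c * q ^ n - a * b : F) ≠ 0 := by
      have hrw : (c * q ^ n - a * b : F) = (1 - a * b / (c * q ^ n)) * (c * q ^ n) := by
        field_simp
      rw [hrw]
      exact mul_ne_zero hE' hcY
    -- the per-k WZ identity
    have keyS : ∀ j, j < n + 1 →
        (1 - c * q ^ n) * (1 - c / (a * b) * q ^ n) *
            QSaal.Tm ((q * q ^ n)⁻¹) (a * b / (c * q ^ n)) a b c q (j + 1)
          - (1 - c / a * q ^ n) * (1 - c / b * q ^ n) *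
            QSaal.Tm ((q ^ n)⁻¹) (a * b * q / (c * q ^ n)) a b c q (j + 1)
        = QSaal.g a b c q (q ^ n) (j + 1) - QSaal.g a b c q (q ^ n) j := by
      intro j hj
      simp only [QSaal.Tm, QSaal.g]
      rw [QSaal.qPoch_succ' ((q * q ^ n)⁻¹) q j, QSaal.qPoch_succ ((q ^ n)⁻¹) q j,
        QSaal.qPoch_succ' a q j, QSaal.qPoch_succ' b q j,
        QSaal.qPoch_succ (a * q) q j, QSaal.qPoch_succ (b * q) q j,
        QSaal.qPoch_succ q q j, QSaal.qPoch_succ' (a * b / (c * q ^ n)) q j,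
        QSaal.qPoch_succ (a * b * q / (c * q ^ n)) q j, QSaal.qPoch_succ c q j,
        pow_succ q j,
        show ((q * q ^ n)⁻¹ * q : F) = (q ^ n)⁻¹ by
          rw [mul_inv, mul_comm q⁻¹, mul_assoc, inv_mul_cancel₀ hq, mul_one],
        show (a * b / (c * q ^ n) * q : F) = a * b * q / (c * q ^ n) by ring]
      rcases Nat.lt_or_ge j n with hjn | hjn
      · -- generic case j < n
        rw [QSaal.conv1 a b c q (q ^ n) (q ^ j) (qPoch q q j)
            (qPoch (a * b * q / (c * q ^ n)) q j) (qPoch c q j)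
            (qPoch ((q ^ n)⁻¹) q j) (qPoch (a * q) q j) (qPoch (b * q) q j)
            ha hb hc hq hY hflat',
          QSaal.conv2 a b c q (q ^ n) (q ^ j) (qPoch q q j)
            (qPoch (a * b * q / (c * q ^ n)) q j) (qPoch c q j)
            (qPoch ((q ^ n)⁻¹) q j) (qPoch (a * q) q j) (qPoch (b * q) q j)
            ha hb hc hq hY (hEfac j hjn),
          QSaal.conv3 a b c q (q ^ n) (q ^ j) (qPoch q q j)
            (qPoch (a * b * q / (c * q ^ n)) q j) (qPoch c q j)
            (qPoch ((q ^ n)⁻¹) q j) (qPoch (a * q) q j) (qPoch (b * q) q j)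
            ha hb hc hq hY (hEfac j hjn),
          QSaal.conv4 a b c q (q ^ n) (qPoch q q j)
            (qPoch (a * b * q / (c * q ^ n)) q j) (qPoch c q j)
            (qPoch ((q ^ n)⁻¹) q j) (qPoch (a * q) q j) (qPoch (b * q) q j)
            ha hb hc hY,
          ← mul_sub, ← mul_sub,
          QSaal.scalar_keyS a b c q (q ^ n) (q ^ j) ha hb hc hq hY
            (hfq' j (by omega)) (hflat j hjn) (hfc' j (by omega)) hflat']
      · -- special case j = n
        have hj' : j = n := by omega
        rw [hj']
        rw [show (1 : F) - (q ^ n)⁻¹ * q ^ n = 0 by rw [inv_mul_cancel₀ hY, sub_self]]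
        rw [QSaal.conv1 a b c q (q ^ n) (q ^ n) (qPoch q q n)
            (qPoch (a * b * q / (c * q ^ n)) q n) (qPoch c q n)
            (qPoch ((q ^ n)⁻¹) q n) (qPoch (a * q) q n) (qPoch (b * q) q n)
            ha hb hc hq hY hflat']
        simp only [mul_zero, zero_mul, zero_div, sub_zero, zero_sub]
        rw [QSaal.conv4 a b c q (q ^ n) (qPoch q q n)
            (qPoch (a * b * q / (c * q ^ n)) q n) (qPoch c q n)
            (qPoch ((q ^ n)⁻¹) q n) (qPoch (a * q) q n) (qPoch (b * q) q n)
            ha hb hc hY,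
          QSaal.scalar_keyN a b c q (q ^ n) ha hb hc hq hY
            (hfq' n le_rfl) (hfc' n le_rfl) hflat']
        ring
    -- telescoping
    have hT0 : qPoch ((q ^ n)⁻¹ : F) q (n + 1) = 0 :=
      QSaal.qPoch_eq_zero (Nat.lt_succ_self n) (by rw [inv_mul_cancel₀ hY, sub_self])
    have hTn1 : QSaal.Tm ((q ^ n)⁻¹) (a * b * q / (c * q ^ n)) a b c q (n + 1) = 0 := by
      simp [QSaal.Tm, hT0]
    have hgtop : QSaal.g a b c q (q ^ n) (n + 1) = 0 := by
      simp [QSaal.g, hT0]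
    have tele : ∀ N : ℕ, N ≤ n + 1 → ∑ j ∈ Finset.range (N + 1),
          ((1 - c * q ^ n) * (1 - c / (a * b) * q ^ n) *
            QSaal.Tm ((q * q ^ n)⁻¹) (a * b / (c * q ^ n)) a b c q j
          - (1 - c / a * q ^ n) * (1 - c / b * q ^ n) *
            QSaal.Tm ((q ^ n)⁻¹) (a * b * q / (c * q ^ n)) a b c q j)
        = QSaal.g a b c q (q ^ n) N := by
      intro N
      induction N with
      | zero =>
        intro _
        simp [QSaal.Tm, QSaal.g, qPoch]
      | succ N ihN =>
        intro hN
        rw [Finset.sum_range_succ, ihN (by omega), keyS N (by omega)]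
        ring
    have hext : (∑ j ∈ Finset.range (n + 1),
          QSaal.Tm ((q ^ n)⁻¹) (a * b * q / (c * q ^ n)) a b c q j)
        = ∑ j ∈ Finset.range (n + 1 + 1),
          QSaal.Tm ((q ^ n)⁻¹) (a * b * q / (c * q ^ n)) a b c q j := by
      rw [Finset.sum_range_succ _ (n + 1), hTn1, add_zero]
    have h0 : (1 - c * q ^ n) * (1 - c / (a * b) * q ^ n) *
          (∑ j ∈ Finset.range (n + 1 + 1),
            QSaal.Tm ((q * q ^ n)⁻¹) (a * b / (c * q ^ n)) a b c q j)
        - (1 - c / a * q ^ n) * (1 - c / b * q ^ n) *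
          (∑ j ∈ Finset.range (n + 1 + 1),
            QSaal.Tm ((q ^ n)⁻¹) (a * b * q / (c * q ^ n)) a b c q j) = 0 := by
      rw [Finset.mul_sum, Finset.mul_sum, ← Finset.sum_sub_distrib, tele (n + 1) le_rfl, hgtop]
    have key : (1 - c * q ^ n) * (1 - c / (a * b) * q ^ n) *
          (∑ j ∈ Finset.range (n + 1 + 1),
            QSaal.Tm ((q * q ^ n)⁻¹) (a * b / (c * q ^ n)) a b c q j)
        = (1 - c / a * q ^ n) * (1 - c / b * q ^ n) *
          (∑ j ∈ Finset.range (n + 1),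
            QSaal.Tm ((q ^ n)⁻¹) (a * b * q / (c * q ^ n)) a b c q j) := by
      rw [hext]
      exact sub_eq_zero.mp h0
    -- final assembly
    have hPc : qPoch c q n ≠ 0 := h3 n hn
    have hPcab : qPoch (c / (a * b)) q n ≠ 0 :=
      QSaal.qPoch_ne_of_factors fun i hi => hfcab i (by omega)
    have hfcn : (1 : F) - c * q ^ n ≠ 0 := hfc n hnm
    have hfcabn : (1 : F) - c / (a * b) * q ^ n ≠ 0 := hfcab n hnm
    have hβ : ((1 - c * q ^ n) * (1 - c / (a * b) * q ^ n) : F) ≠ 0 :=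
      mul_ne_zero hfcn hfcabn
    have hRHS : (1 - c / a * q ^ n) * (1 - c / b * q ^ n) *
          (qPoch (c / a) q n * qPoch (c / b) q n / (qPoch c q n * qPoch (c / (a * b)) q n))
        = (1 - c * q ^ n) * (1 - c / (a * b) * q ^ n) *
          (qPoch (c / a) q (n + 1) * qPoch (c / b) q (n + 1) /
            (qPoch c q (n + 1) * qPoch (c / (a * b)) q (n + 1))) := by
      rw [QSaal.qPoch_succ (c / a) q n, QSaal.qPoch_succ (c / b) q n,
        QSaal.qPoch_succ c q n, QSaal.qPoch_succ (c / (a * b)) q n,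
        ← mul_div_assoc, ← mul_div_assoc,
        div_eq_div_iff (mul_ne_zero hPc hPcab)
          (mul_ne_zero (mul_ne_zero hPc hfcn) (mul_ne_zero hPcab hfcabn))]
      ring
    apply mul_left_cancel₀ hβ
    rw [key, IH']
    exact hRHS
end

section
/- Let \lambda be a partition with at most n parts and let \lambda' be its conjugate partition (so \lambda'_l = \#\{i : \lambda_i \geq l\}). Then \prod_{1 \leq j < k \leq n} w^-_{jk} = [n]_t! / \prod_{l \geq 0} [\lambda'_l - \lambda'_{l+1}]_t!, where w^-_{jk} = (1-t^{k-j+1})/(1-t^{k-j}) if \lambda_j \neq \lambda_k and w^-_{jk} = 1 if \lambda_j = \lambda_k, with the convention \lambda'_0 = n, and [m]_t! = \prod_{j=1}^m (1-t^j)/(1-t). -/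
/-- The conjugate partition: `λ'_l = #{i : λ_i ≥ l}` (so `λ'_0 = n`). -/
def conjP (n : ℕ) (lam : Fin n → ℕ) (l : ℕ) : ℕ :=
  (Finset.univ.filter fun i => l ≤ lam i).card

/-- The t-factorial `[m]_t! = ∏_{j=1}^m (1-t^j)/(1-t)`. -/
noncomputable def tFact {F : Type*} [Field F] (t : F) (m : ℕ) : F :=
  ∏ j ∈ Finset.range m, (1 - t ^ (j + 1)) / (1 - t)


/-! Since `lam` is antitone, the indices `j < k` with `lam j ≠ lam k` are the first
`k - c_k` ones, where `c_k = levelRank lam k` counts the earlier indices at the level of `k`.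
Hence the factors `w⁻_{jk}` with `k` fixed telescope to `(1 - t^{k+1}) / (1 - t^{c_k+1})`.
Over all `k` the numerators multiply to `[n]_t!`, and the denominators, grouped by level `l`,
to `∏_l [m_l]_t!`, where `m_l = λ'_l - λ'_{l+1}` is the number of parts equal to `l`. -/

open Finset

lemma Finset.prod_card_filter_lt {α M : Type*} [LinearOrder α] [CommMonoid M] (f : ℕ → M)
    (s : Finset α) : ∏ k ∈ s, f #{j ∈ s | j < k} = ∏ r ∈ range #s, f r := by
  classical
  induction s using Finset.induction_on_max with
  | empty => simp
  | insert a s hlt ih =>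
    have ha : a ∉ s := fun h => lt_irrefl a (hlt a h)
    have hself : {j ∈ insert a s | j < a} = s := by
      ext j
      simp only [mem_filter, mem_insert]
      exact ⟨fun ⟨h, hj⟩ => h.resolve_left hj.ne, fun h => ⟨Or.inr h, hlt j h⟩⟩
    have hrest : ∀ k ∈ s, {j ∈ insert a s | j < k} = {j ∈ s | j < k} := fun k hk => by
      rw [filter_insert, if_neg (not_lt.mpr (hlt k hk).le)]
    rw [prod_insert ha, hself, prod_congr rfl fun k hk => congrArg f (congrArg card (hrest k hk)),
      ih, card_insert_of_notMem ha, prod_range_succ, mul_comm]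

lemma Finset.eq_range_card_of_isLowerSet {s : Finset ℕ} (hs : IsLowerSet (s : Set ℕ)) :
    s = range #s := by
  obtain huniv | ⟨a, ha⟩ := hs.eq_univ_or_Iio
  · exact absurd (huniv ▸ s.finite_toSet) Set.infinite_univ
  · have hs : s = range a := by ext; simp [← Finset.mem_coe, ha]
    rw [hs, card_range]

lemma prod_range_div_telescope {G₀ : Type*} [CommGroupWithZero G₀] (f : ℕ → G₀) {k m : ℕ}
    (hm : m ≤ k) (hf : ∀ d, k - m < d → d ≤ k + 1 → f d ≠ 0) :
    ∏ r ∈ range m, f (k - r + 1) / f (k - r) = f (k + 1) / f (k - m + 1) := by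
  induction m with
  | zero => simp [div_self (hf (k + 1) (by omega) le_rfl)]
  | succ m ih =>
    rw [prod_range_succ, ih (by omega) fun d h₁ h₂ => hf d (by omega) h₂,
      div_mul_div_cancel₀ (hf _ (by omega) (by omega)), show k - (m + 1) + 1 = k - m by omega]

section Levels

variable {ι β : Type*} [Fintype ι] [LinearOrder ι] [DecidableEq β]

def levelRank (lam : ι → β) (k : ι) : ℕ :=
  #{j | j < k ∧ lam j = lam k}

lemma prod_prod_range_card_fiber {M : Type*} [CommMonoid M] (g : ℕ → M) (lam : ι → β)
    {s : Finset β} (hs : ∀ k, lam k ∈ s) :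
    ∏ b ∈ s, ∏ r ∈ range #{i | lam i = b}, g r = ∏ k, g (levelRank lam k) := by
  rw [← prod_fiberwise_of_maps_to (fun k _ => hs k)]
  refine prod_congr rfl fun b _ => ?_
  rw [← prod_card_filter_lt]
  refine prod_congr rfl fun k hk => congrArg g (congrArg card ?_)
  rw [mem_filter] at hk
  ext j
  simp only [mem_filter, mem_univ, true_and, hk.2]
  exact and_comm

end Levels

lemma conjP_sub_conjP_succ (n : ℕ) (lam : Fin n → ℕ) (l : ℕ) :
    conjP n lam l - conjP n lam (l + 1) = #{i | lam i = l} := by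
  have hsub : ({i | l + 1 ≤ lam i} : Finset (Fin n)) ⊆ ({i | l ≤ lam i} : Finset (Fin n)) :=
    fun _ => by simp only [mem_filter, mem_univ, true_and]; omega
  rw [conjP, conjP, ← card_sdiff_of_subset hsub]
  congr 1
  ext i
  simp only [mem_sdiff, mem_filter, mem_univ, true_and]
  omega

lemma prod_tFact_conjP_sub_conjP_succ {F : Type*} [Field F] (t : F) (n : ℕ) (lam : Fin n → ℕ) :
    ∏ l ∈ range ((∑ i, lam i) + 1), tFact t (conjP n lam l - conjP n lam (l + 1))
      = ∏ k, (1 - t ^ (levelRank lam k + 1)) / (1 - t) := by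
  simp only [conjP_sub_conjP_succ, tFact]
  refine prod_prod_range_card_fiber (fun r => (1 - t ^ (r + 1)) / (1 - t)) lam fun k => ?_
  exact mem_range_succ_iff.mpr (single_le_sum (fun i _ => Nat.zero_le (lam i)) (mem_univ k))

section FinLevels

variable {n : ℕ} {β : Type*}

lemma card_filter_lt_ne_add_levelRank [DecidableEq β] (lam : Fin n → β) (k : Fin n) :
    #{j | j < k ∧ lam j ≠ lam k} + levelRank lam k = k := by
  rw [levelRank, add_comm, ← filter_filter, ← filter_filter, card_filter_add_card_filter_not,
    filter_gt_eq_Iio, Fin.card_Iio]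

lemma isLowerSet_val_filter_lt_ne [LinearOrder β] {lam : Fin n → β} (hlam : Antitone lam)
    (k : Fin n) :
    IsLowerSet (({j | j < k ∧ lam j ≠ lam k} : Finset (Fin n)).image Fin.val : Set ℕ) := by
  intro _ i hij hi
  simp only [coe_image, Set.mem_image, mem_coe, mem_filter, mem_univ, true_and] at hi ⊢
  obtain ⟨j, hj, rfl⟩ := hi
  have hik : i < k := lt_of_le_of_lt hij hj.1
  refine ⟨⟨i, hik.trans k.isLt⟩, ?_, rfl⟩
  have hkj : lam k < lam j := lt_of_le_of_ne (hlam hj.1.le) (Ne.symm hj.2)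
  exact ⟨hik, (hkj.trans_le (hlam (show (⟨i, _⟩ : Fin n) ≤ j from hij))).ne'⟩

lemma prod_filter_lt_ne_telescope {G₀ : Type*} [CommGroupWithZero G₀] (f : ℕ → G₀)
    [LinearOrder β] {lam : Fin n → β} (hlam : Antitone lam) (k : Fin n)
    (hf : ∀ d : ℕ, 1 ≤ d → d ≤ k + 1 → f d ≠ 0) :
    ∏ j ∈ {j | j < k ∧ lam j ≠ lam k}, f ((k : ℕ) - j + 1) / f ((k : ℕ) - j)
      = f (k + 1) / f (levelRank lam k + 1) := by
  set s : Finset (Fin n) := {j | j < k ∧ lam j ≠ lam k}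
  have hcard : #s + levelRank lam k = k := card_filter_lt_ne_add_levelRank lam k
  have hrange : s.image Fin.val = range #s := by
    rw [eq_range_card_of_isLowerSet (isLowerSet_val_filter_lt_ne hlam k),
      card_image_of_injective _ Fin.val_injective]
  rw [← prod_image (f := fun j : ℕ => f ((k : ℕ) - j + 1) / f ((k : ℕ) - j))
      Fin.val_injective.injOn, hrange,
    prod_range_div_telescope f (by omega) fun d h₁ h₂ => hf d (by omega) h₂]
  congr 3
  omega

end FinLevels

/-- `∏_{1≤j<k≤n} w⁻_{jk} = [n]_t! / ∏_{l≥0} [λ'_l - λ'_{l+1}]_t!`,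
where `w⁻_{jk} = (1-t^{k-j+1})/(1-t^{k-j})` if `λ_j ≠ λ_k` and `1` otherwise. -/
theorem wminus_product_eq_tMultinomial {F : Type*} [Field F] (t : F)
    (n : ℕ) (hn : 1 ≤ n) (lam : Fin n → ℕ)
    (hmono : ∀ i j : Fin n, i ≤ j → lam j ≤ lam i)
    (ht : ∀ m : ℕ, 1 ≤ m → m ≤ n → (1 : F) - t ^ m ≠ 0) :
    (∏ p ∈ Finset.univ.filter (fun p : Fin n × Fin n => p.1 < p.2),
        if lam p.1 = lam p.2 then (1 : F)
        else (1 - t ^ ((p.2 : ℕ) - (p.1 : ℕ) + 1)) / (1 - t ^ ((p.2 : ℕ) - (p.1 : ℕ))))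
      = tFact t n /
        ∏ l ∈ Finset.range ((∑ i, lam i) + 1),
          tFact t (conjP n lam l - conjP n lam (l + 1)) := by
  have hpairs : (∏ p ∈ Finset.univ.filter (fun p : Fin n × Fin n => p.1 < p.2),
        if lam p.1 = lam p.2 then (1 : F)
        else (1 - t ^ ((p.2 : ℕ) - (p.1 : ℕ) + 1)) / (1 - t ^ ((p.2 : ℕ) - (p.1 : ℕ))))
      = ∏ k, ∏ j ∈ {j | j < k ∧ lam j ≠ lam k},
          (1 - t ^ ((k : ℕ) - j + 1)) / (1 - t ^ ((k : ℕ) - j)) := by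
    rw [prod_filter, Fintype.prod_prod_type, prod_comm]
    refine prod_congr rfl fun k _ => ?_
    rw [prod_filter]
    refine prod_congr rfl fun j _ => ?_
    by_cases hjk : j < k <;> by_cases hlam : lam j = lam k <;> simp [hjk, hlam]
  have he : (1 : F) - t ≠ 0 := by simpa using ht 1 le_rfl hn
  rw [hpairs, prod_tFact_conjP_sub_conjP_succ, tFact,
    ← Fin.prod_univ_eq_prod_range (fun j => (1 - t ^ (j + 1)) / (1 - t)), ← prod_div_distrib]
  refine prod_congr rfl fun k _ => ?_
  rw [prod_filter_lt_ne_telescope (fun d => 1 - t ^ d) hmono k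
    fun d h₁ h₂ => ht d h₁ (h₂.trans k.isLt), div_div_div_cancel_right₀ he]
end
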